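/- arXiv:2106.07231 — 2 statements merged into one kernel-verified Lean document; each statement's English description precedes it below -/
import Mathlib

section
/- In G, the element x has order exactly 2^n, the element y² has order at most 2^{n-2}, and (xy)² = x² y² z^{-1}; consequently the exponent of the centralizer C_G(G') is 2^n. -/
/-!
The relations say `y x = x y z`, `z x = x z⁻¹` and `z y = y z⁻¹`. Hence `x y` commutes with `z`,
`x²` and `y²` are central, `⟨z⟩` is normal and `G/⟨z⟩` is abelian, so `G' ≤ ⟨z⟩` and
`x y ∈ C_G(G')`. Writing `(g h)² = g² h² (h⁻¹ [h⁻¹, g⁻¹] h)`, every square lies in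
`⟨x², y²⟩ ⟨z⟩`, a central subgroup times `⟨z⟩` on which the `2^(n-1)`-th power is trivial
(`m < n` and `4 ∣ 2^(n-1)`); so `g^(2^n) = 1` for all `g`. The exponent sum of `x` modulo `2^n`
is a homomorphism `G → ℤ/2^n` sending both `x` and `x y` to `1`, which bounds their orders from
below.
-/
namespace MIP

/-- Relators of the group `G`. -/
def grels (n m : ℕ) : Set (FreeGroup (Fin 3)) :=
  {(FreeGroup.of 2)⁻¹ * ((FreeGroup.of 1)⁻¹ * (FreeGroup.of 0)⁻¹ * FreeGroup.of 1 * FreeGroup.of 0),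
   FreeGroup.of 0 ^ (2 ^ n), FreeGroup.of 1 ^ (2 ^ m), FreeGroup.of 2 ^ 4,
   (FreeGroup.of 0)⁻¹ * FreeGroup.of 2 * FreeGroup.of 0 * FreeGroup.of 2,
   (FreeGroup.of 1)⁻¹ * FreeGroup.of 2 * FreeGroup.of 1 * FreeGroup.of 2}

/-- Relators of the group `H`. -/
def hrels (n m : ℕ) : Set (FreeGroup (Fin 3)) :=
  {(FreeGroup.of 2)⁻¹ * ((FreeGroup.of 1)⁻¹ * (FreeGroup.of 0)⁻¹ * FreeGroup.of 1 * FreeGroup.of 0),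
   FreeGroup.of 0 ^ (2 ^ n), FreeGroup.of 1 ^ (2 ^ m), FreeGroup.of 2 ^ 4,
   (FreeGroup.of 0)⁻¹ * FreeGroup.of 2 * FreeGroup.of 0 * FreeGroup.of 2,
   (FreeGroup.of 1)⁻¹ * FreeGroup.of 2 * FreeGroup.of 1 * (FreeGroup.of 2)⁻¹}

abbrev GG (n m : ℕ) := PresentedGroup (grels n m)
abbrev HH (n m : ℕ) := PresentedGroup (hrels n m)

def gx (n m : ℕ) : GG n m := PresentedGroup.of 0
def gy (n m : ℕ) : GG n m := PresentedGroup.of 1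
def gz (n m : ℕ) : GG n m := PresentedGroup.of 2
def ha (n m : ℕ) : HH n m := PresentedGroup.of 0
def hb (n m : ℕ) : HH n m := PresentedGroup.of 1
def hc (n m : ℕ) : HH n m := PresentedGroup.of 2

open Subgroup
open scoped commutatorElement

section Generation

variable {G : Type*} [Group G]

theorem mem_center_of_forall_commute {S : Set G} (hS : closure S = ⊤) {g : G}
    (h : ∀ s ∈ S, Commute s g) : g ∈ center G := by
  rw [← centralizer_univ, ← coe_top, ← hS, centralizer_closure, mem_centralizer_iff]
  exact h

theorem commutator_le_of_forall_commutatorElement_mem {S : Set G} (hS : closure S = ⊤)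
    {N : Subgroup G} [N.Normal] (h : ∀ s ∈ S, ∀ t ∈ S, ⁅s, t⁆ ∈ N) : commutator G ≤ N := by
  rw [← Normal.quotient_commutative_iff_commutator_le, ← center_eq_top_iff]
  have hS' : closure (QuotientGroup.mk' N '' S) = ⊤ := by
    rw [← MonoidHom.map_closure, hS, ← MonoidHom.range_eq_map,
      MonoidHom.range_eq_top.mpr (QuotientGroup.mk'_surjective N)]
  rw [eq_top_iff, ← hS', closure_le]
  rintro _ ⟨t, ht, rfl⟩
  refine mem_center_of_forall_commute hS' ?_
  rintro _ ⟨s, hs, rfl⟩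
  rw [Commute, SemiconjBy, ← commutatorElement_eq_one_iff_mul_comm, ← map_commutatorElement,
    QuotientGroup.mk'_apply, QuotientGroup.eq_one_iff]
  exact h s hs t ht

theorem pow_eq_one_of_mem_closure_of_subset_center {S : Set G} (hS : S ⊆ center G) {N : ℕ}
    (h : ∀ s ∈ S, s ^ N = 1) {c : G} (hc : c ∈ closure S) : c ^ N = 1 := by
  have hC : closure S ≤ center G := closure_le _ |>.mpr hS
  induction hc using closure_induction with
  | mem s hs => exact h s hs
  | one => exact one_pow N
  | mul a b ha hb iha ihb =>
    rw [Commute.mul_pow (mem_center_iff.mp (hC hb) a), iha, ihb, one_mul]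
  | inv a _ iha => rw [inv_pow, iha, inv_one]

theorem exists_sq_eq_mul_zpow {S : Set G} (hS : closure S = ⊤) {C : Subgroup G}
    (hC : C ≤ center G) (hSC : ∀ s ∈ S, s ^ 2 ∈ C) {z : G} (hG' : commutator G ≤ zpowers z)
    (g : G) : ∃ c ∈ C, ∃ k : ℤ, g ^ 2 = c * z ^ k := by
  have hg : g ∈ closure S := hS ▸ mem_top g
  induction hg using closure_induction with
  | mem s hs => exact ⟨s ^ 2, hSC s hs, 0, by rw [zpow_zero, mul_one]⟩
  | one => exact ⟨1, one_mem C, 0, by simp⟩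
  | mul a b _ _ iha ihb =>
    obtain ⟨c, hc, k, hak⟩ := iha
    obtain ⟨d, hd, l, hbl⟩ := ihb
    obtain ⟨j, hj⟩ := mem_zpowers_iff.mp <| hG' <|
      (commutator_normal ⊤ ⊤).conj_mem _ (commutator_mem_commutator (mem_top b⁻¹) (mem_top a⁻¹)) b⁻¹
    refine ⟨c * d, mul_mem hc hd, k + l + j, ?_⟩
    calc (a * b) ^ 2 = a ^ 2 * b ^ 2 * (b⁻¹ * ⁅b⁻¹, a⁻¹⁆ * b⁻¹⁻¹) := by
          simp only [sq, commutatorElement_def]; group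
      _ = c * (z ^ k * d) * z ^ l * z ^ j := by rw [hak, hbl, ← hj]; group
      _ = c * d * z ^ (k + l + j) := by
          rw [mem_center_iff.mp (hC hd) (z ^ k)]; group
  | inv a _ iha =>
    obtain ⟨c, hc, k, hak⟩ := iha
    refine ⟨c⁻¹, inv_mem hc, -k, ?_⟩
    rw [inv_pow, hak, mul_inv_rev, zpow_neg, mem_center_iff.mp (hC (inv_mem hc))]

theorem pow_two_mul_eq_one_of_commutator_le_zpowers {S : Set G} (hS : closure S = ⊤)
    {C : Subgroup G} (hC : C ≤ center G) (hSC : ∀ s ∈ S, s ^ 2 ∈ C) {z : G}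
    (hG' : commutator G ≤ zpowers z) {N : ℕ} (hCN : ∀ c ∈ C, c ^ N = 1) (hzN : z ^ N = 1) (g : G) : g ^ (2 * N) = 1 := by
  obtain ⟨c, hc, k, hg⟩ := exists_sq_eq_mul_zpow hS hC hSC hG' g
  rw [pow_mul, hg, Commute.mul_pow (mem_center_iff.mp (hC hc) _).symm, hCN c hc, ← zpow_natCast,
    ← zpow_mul, mul_comm, zpow_mul, zpow_natCast, hzN, one_zpow, one_mul]

theorem orderOf_eq_of_map_eq_ofAdd_one {k : ℕ} (f : G →* Multiplicative (ZMod k)) {g : G}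
    (hf : f g = Multiplicative.ofAdd 1) (hg : g ^ k = 1) : orderOf g = k := by
  refine Nat.dvd_antisymm (orderOf_dvd_of_pow_eq_one hg) ?_
  simpa [hf, orderOf_ofAdd_eq_addOrderOf] using orderOf_map_dvd f g

end Generation

section Relations

variable {G : Type*} [Group G] {x y z : G}

theorem mul_sq_eq (hyx : y * x = x * y * z) (hzy : z * y = y * z⁻¹) :
    (x * y) ^ 2 = x ^ 2 * y ^ 2 * z⁻¹ :=
  calc (x * y) ^ 2 = x * (y * x) * y := by rw [sq]; group
    _ = x * x * y * (z * y) := by rw [hyx]; group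
    _ = x * x * y * (y * z⁻¹) := by rw [hzy]
    _ = x ^ 2 * y ^ 2 * z⁻¹ := by rw [sq, sq]; group

theorem mul_eq_inv_mul_of_mul_eq_mul_inv {g : G} (h : z * g = g * z⁻¹) : g * z = z⁻¹ * g :=
  calc g * z = z⁻¹ * (z * g) * z := by group
    _ = z⁻¹ * (g * z⁻¹) * z := by rw [h]
    _ = z⁻¹ * g := by group

theorem commute_mul_of_mul_eq_mul_inv (hzx : z * x = x * z⁻¹) (hzy : z * y = y * z⁻¹) :
    Commute (x * y) z :=
  calc x * y * z = x * (z⁻¹ * y) := by rw [mul_assoc, mul_eq_inv_mul_of_mul_eq_mul_inv hzy]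
    _ = z * x * y := by rw [hzx]; group
    _ = z * (x * y) := mul_assoc _ _ _

theorem commute_sq_left (hyx : y * x = x * y * z) (hzx : z * x = x * z⁻¹) :
    Commute (x ^ 2) y :=
  calc x ^ 2 * y = x * (x * y * z) * z⁻¹ := by rw [sq]; group
    _ = x * y * (x * z⁻¹) := by rw [← hyx]; group
    _ = x * y * z * x := by rw [← hzx]; group
    _ = y * x ^ 2 := by rw [← hyx, sq]; group

theorem commute_sq_right (hyx : y * x = x * y * z) (hzy : z * y = y * z⁻¹) :
    Commute (y ^ 2) x :=
  calc y ^ 2 * x = y * (x * y * z) := by rw [sq, mul_assoc, hyx]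
    _ = y * x * y * z := by group
    _ = x * y * (z * y) * z := by rw [hyx]; group
    _ = x * y ^ 2 := by rw [hzy, sq]; group

theorem commutatorElement_eq_inv (hyx : y * x = x * y * z) (hzx : z * x = x * z⁻¹)
    (hzy : z * y = y * z⁻¹) : ⁅x, y⁆ = z⁻¹ :=
  calc ⁅x, y⁆ = x * y * (y * x)⁻¹ := by rw [commutatorElement_def]; group
    _ = x * y * z⁻¹ * (x * y)⁻¹ := by rw [hyx]; group
    _ = z⁻¹ := by rw [(commute_mul_of_mul_eq_mul_inv hzx hzy).inv_right.eq]; group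

theorem mem_normalizer_zpowers {g : G} (h : z * g = g * z⁻¹) : g ∈ normalizer (zpowers z) := by
  have hconj : g * z * g⁻¹ = z⁻¹ :=
    calc g * z * g⁻¹ = (z * g * g⁻¹)⁻¹ := by rw [h]; group
      _ = z⁻¹ := by group
  rw [mem_normalizer_iff_map_conj_eq, MonoidHom.map_zpowers]
  exact (congrArg zpowers hconj).trans zpowers_inv

end Relations

section TwoGenerated

variable {G : Type*} [Group G] {x y z : G}

theorem zpowers_normal (hgen : closure {x, y} = ⊤) (hzx : z * x = x * z⁻¹)
    (hzy : z * y = y * z⁻¹) : (zpowers z).Normal := by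
  rw [← normalizer_eq_top_iff, eq_top_iff, ← hgen, closure_le]
  rintro g (rfl | rfl)
  exacts [mem_normalizer_zpowers hzx, mem_normalizer_zpowers hzy]

theorem commutator_le_zpowers (hgen : closure {x, y} = ⊤) (hyx : y * x = x * y * z)
    (hzx : z * x = x * z⁻¹) (hzy : z * y = y * z⁻¹) : commutator G ≤ zpowers z := by
  have := zpowers_normal hgen hzx hzy
  have hxy : ⁅x, y⁆ ∈ zpowers z := commutatorElement_eq_inv hyx hzx hzy ▸ inv_mem (mem_zpowers z)
  refine commutator_le_of_forall_commutatorElement_mem hgen ?_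
  rintro s (rfl | rfl) t (rfl | rfl)
  · simp
  · exact hxy
  · rw [← commutatorElement_inv]; exact inv_mem hxy
  · simp

theorem mul_mem_centralizer_commutator (hgen : closure {x, y} = ⊤) (hyx : y * x = x * y * z)
    (hzx : z * x = x * z⁻¹) (hzy : z * y = y * z⁻¹) :
    x * y ∈ centralizer (commutator G : Set G) := by
  refine centralizer_le (commutator_le_zpowers hgen hyx hzx hzy) ?_
  rw [zpowers_eq_closure, centralizer_closure, mem_centralizer_singleton_iff]
  exact (commute_mul_of_mul_eq_mul_inv hzx hzy).eq

theorem pow_two_mul_eq_one_of_relations (hgen : closure {x, y} = ⊤) (hyx : y * x = x * y * z)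
    (hzx : z * x = x * z⁻¹) (hzy : z * y = y * z⁻¹) {N : ℕ} (hxN : x ^ (2 * N) = 1)
    (hyN : y ^ (2 * N) = 1) (hzN : z ^ N = 1) (g : G) : g ^ (2 * N) = 1 := by
  have hsq : ({x ^ 2, y ^ 2} : Set G) ⊆ center G := by
    rintro s (rfl | rfl)
    · refine mem_center_of_forall_commute hgen ?_
      rintro s (rfl | rfl)
      exacts [(Commute.refl s).pow_right 2, (commute_sq_left hyx hzx).symm]
    · refine mem_center_of_forall_commute hgen ?_
      rintro s (rfl | rfl)
      exacts [(commute_sq_right hyx hzy).symm, (Commute.refl s).pow_right 2]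
  refine pow_two_mul_eq_one_of_commutator_le_zpowers hgen (closure_le _ |>.mpr hsq) ?_
    (commutator_le_zpowers hgen hyx hzx hzy)
    (fun c hc => pow_eq_one_of_mem_closure_of_subset_center hsq ?_ hc) hzN g
  · rintro s (rfl | rfl) <;> exact subset_closure (by simp)
  · rintro s (rfl | rfl) <;> rwa [← pow_mul]

end TwoGenerated

section Presentation

variable (n m : ℕ)

theorem gy_mul_gx : gy n m * gx n m = gx n m * gy n m * gz n m := by
  have h : (gz n m)⁻¹ * ((gy n m)⁻¹ * (gx n m)⁻¹ * gy n m * gx n m) = 1 := by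
    simp only [gx, gy, gz, PresentedGroup.of, ← map_inv, ← map_mul]
    exact PresentedGroup.one_of_mem (by simp [grels])
  calc gy n m * gx n m
      = gx n m * gy n m * gz n m * ((gz n m)⁻¹ * ((gy n m)⁻¹ * (gx n m)⁻¹ * gy n m * gx n m)) := by
        group
    _ = gx n m * gy n m * gz n m := by rw [h, mul_one]

theorem gz_mul_gx : gz n m * gx n m = gx n m * (gz n m)⁻¹ := by
  have h : (gx n m)⁻¹ * gz n m * gx n m * gz n m = 1 := by
    simp only [gx, gz, PresentedGroup.of, ← map_inv, ← map_mul]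
    exact PresentedGroup.one_of_mem (by simp [grels])
  calc gz n m * gx n m = gx n m * ((gx n m)⁻¹ * gz n m * gx n m * gz n m) * (gz n m)⁻¹ := by group
    _ = gx n m * (gz n m)⁻¹ := by rw [h, mul_one]

theorem gz_mul_gy : gz n m * gy n m = gy n m * (gz n m)⁻¹ := by
  have h : (gy n m)⁻¹ * gz n m * gy n m * gz n m = 1 := by
    simp only [gy, gz, PresentedGroup.of, ← map_inv, ← map_mul]
    exact PresentedGroup.one_of_mem (by simp [grels])
  calc gz n m * gy n m = gy n m * ((gy n m)⁻¹ * gz n m * gy n m * gz n m) * (gz n m)⁻¹ := by group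
    _ = gy n m * (gz n m)⁻¹ := by rw [h, mul_one]

theorem gx_pow_two_pow : gx n m ^ 2 ^ n = 1 := by
  simp only [gx, PresentedGroup.of, ← map_pow]
  exact PresentedGroup.one_of_mem (by simp [grels])

theorem gy_pow_two_pow : gy n m ^ 2 ^ m = 1 := by
  simp only [gy, PresentedGroup.of, ← map_pow]
  exact PresentedGroup.one_of_mem (by simp [grels])

theorem gz_pow_four : gz n m ^ 4 = 1 := by
  simp only [gz, PresentedGroup.of, ← map_pow]
  exact PresentedGroup.one_of_mem (by simp [grels])

theorem closure_gx_gy : closure {gx n m, gy n m} = ⊤ := by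
  have hx : gx n m ∈ closure {gx n m, gy n m} := subset_closure (Set.mem_insert _ _)
  have hy : gy n m ∈ closure {gx n m, gy n m} := subset_closure (Set.mem_insert_of_mem _ rfl)
  rw [eq_top_iff, ← PresentedGroup.closure_range_of, closure_le]
  rintro _ ⟨i, rfl⟩
  fin_cases i
  · exact hx
  · exact hy
  · change gz n m ∈ _
    rw [show gz n m = (gx n m * gy n m)⁻¹ * (gy n m * gx n m) by rw [gy_mul_gx]; group]
    exact mul_mem (inv_mem (mul_mem hx hy)) (mul_mem hy hx)

def exponentSumX : GG n m →* Multiplicative (ZMod (2 ^ n)) :=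
  PresentedGroup.toGroup (f := ![Multiplicative.ofAdd 1, 1, 1]) <| by
    intro r hr
    simp only [grels, Set.mem_insert_iff, Set.mem_singleton_iff] at hr
    rcases hr with rfl | rfl | rfl | rfl | rfl | rfl <;> simp [← ofAdd_nsmul]

theorem exponentSumX_gx : exponentSumX n m (gx n m) = Multiplicative.ofAdd 1 :=
  PresentedGroup.toGroup.of _

theorem exponentSumX_gy : exponentSumX n m (gy n m) = 1 :=
  PresentedGroup.toGroup.of _

variable {n m}

theorem GG.pow_two_pow_eq_one (hm : 2 < m) (hmn : m < n) (g : GG n m) : g ^ 2 ^ n = 1 := by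
  obtain ⟨N, rfl⟩ : ∃ N, n = N + 1 := ⟨n - 1, by omega⟩
  rw [pow_succ']
  refine pow_two_mul_eq_one_of_relations (closure_gx_gy _ _) (gy_mul_gx _ _) (gz_mul_gx _ _)
    (gz_mul_gy _ _) ?_ ?_ ?_ g
  · rw [← pow_succ']; exact gx_pow_two_pow _ _
  · obtain ⟨k, hk⟩ := pow_dvd_pow 2 (show m ≤ N + 1 by omega)
    rw [← pow_succ', hk, pow_mul, gy_pow_two_pow, one_pow]
  · obtain ⟨k, hk⟩ := pow_dvd_pow 2 (show 2 ≤ N by omega)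
    rw [hk, pow_mul, show 2 ^ 2 = 4 by rfl, gz_pow_four, one_pow]

end Presentation

/-- In `G`, the element `x` has order exactly `2^n`, the element `y²`
has order at most `2^(n-2)`, and `(xy)² = x²y²z⁻¹`; consequently the exponent of the
centralizer `C_G(G')` is `2^n`. -/
theorem statement_8 (n m : ℕ) (hm : 2 < m) (hmn : m < n) :
    orderOf (gx n m) = 2 ^ n ∧
    orderOf (gy n m ^ 2) ≤ 2 ^ (n - 2) ∧
    (gx n m * gy n m) ^ 2 = gx n m ^ 2 * gy n m ^ 2 * (gz n m)⁻¹ ∧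
    Monoid.exponent (Subgroup.centralizer (commutator (GG n m) : Set (GG n m))) =
      2 ^ n := by
  refine ⟨orderOf_eq_of_map_eq_ofAdd_one _ (exponentSumX_gx n m) (gx_pow_two_pow n m), ?_,
    mul_sq_eq (gy_mul_gx n m) (gz_mul_gy n m), ?_⟩
  · have hy : (gy n m ^ 2) ^ 2 ^ (m - 1) = 1 := by
      rw [← pow_mul, ← pow_succ', Nat.sub_add_cancel (by omega), gy_pow_two_pow]
    calc orderOf (gy n m ^ 2) ≤ 2 ^ (m - 1) := orderOf_le_of_pow_eq_one (by positivity) hy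
      _ ≤ 2 ^ (n - 2) := Nat.pow_le_pow_right two_pos (by omega)
  · have hmem := mul_mem_centralizer_commutator (closure_gx_gy n m) (gy_mul_gx n m)
      (gz_mul_gx n m) (gz_mul_gy n m)
    have hxy : orderOf (gx n m * gy n m) = 2 ^ n :=
      orderOf_eq_of_map_eq_ofAdd_one (exponentSumX n m)
        (by rw [map_mul, exponentSumX_gx, exponentSumX_gy, mul_one])
        (GG.pow_two_pow_eq_one hm hmn _)
    refine Nat.dvd_antisymm (Monoid.exponent_dvd_of_forall_pow_eq_one fun g =>
      Subtype.ext (GG.pow_two_pow_eq_one hm hmn g)) ?_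
    rw [← hxy, ← Subgroup.orderOf_mk _ hmem]
    exact Monoid.order_dvd_exponent _

end MIP
end

section
/- Let J be the two-sided ideal of the group algebra kH (k the field with 2 elements) generated by the element c − 1. Then J⁴ = 0, and consequently every element of 1 + J has fourth power equal to 1. -/
/-!
Every element of `H` conjugates `c` to `c` or `c⁻¹`, so `(c - 1) g = g (c^g - 1)` lies in
`kH (c - 1)` for each `g ∈ H`. Hence `(c - 1) kH ⊆ kH (c - 1)`, the two-sided ideal `J` is the
left ideal `kH (c - 1)`, and a product of four elements of `J` can be rewritten as `t (c - 1)⁴`.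
In characteristic 2, `(c - 1)⁴ = c⁴ - 1 = 0` and `(1 + j)⁴ = 1 + j⁴`.
-/

namespace MIP

/-- The group algebra of `H` over the field with 2 elements. -/
abbrev kH (n m : ℕ) := MonoidAlgebra (ZMod 2) (HH n m)

/-- The embedding of `H` into its group algebra over `𝔽₂`. -/
noncomputable def e (n m : ℕ) : HH n m →* kH n m := MonoidAlgebra.of (ZMod 2) (HH n m)

/-- The augmentation map `kH → k`, the `k`-algebra map sending every element of `H` to 1. -/
noncomputable def aug (n m : ℕ) : kH n m →ₐ[ZMod 2] ZMod 2 :=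
  MonoidAlgebra.lift (ZMod 2) (ZMod 2) (HH n m) 1

/-- The augmentation ideal `I` of `kH`, as a `k`-submodule (it is a two-sided ideal). -/
noncomputable def augIdeal (n m : ℕ) : Submodule (ZMod 2) (kH n m) :=
  LinearMap.ker (aug n m).toLinearMap

/-- The element `ỹ = b(a+b+ab)c` of `kH`. -/
noncomputable def yt (n m : ℕ) : kH n m :=
  e n m (hb n m) * (e n m (ha n m) + e n m (hb n m) + e n m (ha n m * hb n m)) *
    e n m (hc n m)

section NormalizingElement

variable {R : Type*} [Ring R] {w : R}

theorem exists_pow_mul_eq_mul_pow (hw : ∀ x, ∃ y, w * x = y * w) (k : ℕ) (x : R) :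
    ∃ y, w ^ k * x = y * w ^ k := by
  induction k generalizing x with
  | zero => exact ⟨x, by simp⟩
  | succ k ih =>
    obtain ⟨y, hy⟩ := hw x
    obtain ⟨z, hz⟩ := ih y
    exact ⟨z, by rw [pow_succ, mul_assoc, hy, ← mul_assoc, hz, mul_assoc]⟩

theorem exists_eq_mul_of_mem_span_singleton (hw : ∀ x, ∃ y, w * x = y * w) {j : R}
    (hj : j ∈ TwoSidedIdeal.span {w}) : ∃ y, j = y * w := by
  let J : TwoSidedIdeal R := TwoSidedIdeal.mk' {x | ∃ y, x = y * w}
    ⟨0, (zero_mul w).symm⟩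
    (fun ⟨y, hy⟩ ⟨z, hz⟩ => ⟨y + z, by rw [hy, hz, add_mul]⟩)
    (fun ⟨y, hy⟩ => ⟨-y, by rw [hy, neg_mul]⟩)
    (fun {x _} ⟨y, hy⟩ => ⟨x * y, by rw [hy, mul_assoc]⟩)
    (fun {_ x} ⟨y, hy⟩ => by
      obtain ⟨z, hz⟩ := hw x
      exact ⟨y * z, by rw [hy, mul_assoc, hz, mul_assoc]⟩)
  have hJ : {w} ⊆ (J : Set R) := by
    rw [Set.singleton_subset_iff, SetLike.mem_coe, TwoSidedIdeal.mem_mk']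
    exact ⟨1, (one_mul w).symm⟩
  simpa [J, TwoSidedIdeal.mem_mk'] using TwoSidedIdeal.mem_span_iff.mp hj J hJ

theorem exists_mul_eq_mul_pow_succ (hw : ∀ x, ∃ y, w * x = y * w) {a b : R} {k : ℕ}
    (ha : ∃ y, a = y * w ^ k) (hb : ∃ z, b = z * w) : ∃ t, a * b = t * w ^ (k + 1) := by
  obtain ⟨y, rfl⟩ := ha
  obtain ⟨z, rfl⟩ := hb
  obtain ⟨t, ht⟩ := exists_pow_mul_eq_mul_pow hw k z
  exact ⟨y * t, by rw [mul_assoc, ← mul_assoc (w ^ k), ht, pow_succ]; simp only [mul_assoc]⟩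

end NormalizingElement

theorem conj_inv_mul_eq_iff {G : Type*} [Group G] {x g d d' : G} (h : x⁻¹ * d * x = d') :
    x⁻¹ * g * x = d' ↔ g = d := by
  rw [← h, mul_left_inj, mul_right_inj]

theorem mem_normalizer_pair {G : Type*} [Group G] {c x : G}
    (h : x⁻¹ * c * x = c ∨ x⁻¹ * c * x = c⁻¹) : x ∈ Subgroup.normalizer {c, c⁻¹} := by
  rw [Subgroup.mem_set_normalizer_iff'']
  intro g
  have hinv (d : G) : x⁻¹ * d⁻¹ * x = (x⁻¹ * d * x)⁻¹ := by group
  simp only [Set.mem_insert_iff, Set.mem_singleton_iff]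
  rcases h with h | h
  · rw [conj_inv_mul_eq_iff h, conj_inv_mul_eq_iff (by rw [hinv, h])]
  · rw [conj_inv_mul_eq_iff (by rw [hinv, h, inv_inv]), conj_inv_mul_eq_iff h, or_comm]

theorem exists_of_sub_one_mul_eq_mul {k G : Type*} [CommRing k] [Group G] {c : G}
    (hc : Subgroup.normalizer {c, c⁻¹} = ⊤) (x : MonoidAlgebra k G) :
    ∃ y, (MonoidAlgebra.of k G c - 1) * x = y * (MonoidAlgebra.of k G c - 1) := by
  set of := MonoidAlgebra.of k G
  induction x using MonoidAlgebra.induction_on with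
  | of g =>
    have hg : g⁻¹ * c * g ∈ ({c, c⁻¹} : Set G) :=
      (Subgroup.mem_set_normalizer_iff''.mp (hc ▸ Subgroup.mem_top g) c).mp (.inl rfl)
    have hcg : (of c - 1) * of g = of g * (of (g⁻¹ * c * g) - 1) := by
      rw [mul_sub, mul_one, ← map_mul, show g * (g⁻¹ * c * g) = c * g by group, map_mul,
        sub_mul, one_mul]
    rcases hg with hg | hg
    · exact ⟨of g, by rw [hcg, hg]⟩
    · -- `c⁻¹ - 1 = -c⁻¹ (c - 1)`
      refine ⟨-(of g * of c⁻¹), ?_⟩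
      rw [hcg, hg]
      simp only [mul_sub, neg_mul, mul_assoc, ← map_mul, inv_mul_cancel, mul_one]
      abel
  | add x y hx hy =>
    obtain ⟨s, hs⟩ := hx
    obtain ⟨t, ht⟩ := hy
    exact ⟨s + t, by rw [mul_add, hs, ht, add_mul]⟩
  | smul r x hx =>
    obtain ⟨s, hs⟩ := hx
    exact ⟨r • s, by rw [mul_smul_comm, hs, smul_mul_assoc]⟩

section GroupH

variable {n m : ℕ}

theorem hc_pow_four : hc n m ^ 4 = 1 :=
  PresentedGroup.one_of_mem (by simp [hrels])

theorem ha_inv_mul_hc_mul_ha : (ha n m)⁻¹ * hc n m * ha n m = (hc n m)⁻¹ :=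
  eq_inv_of_mul_eq_one_left (PresentedGroup.one_of_mem (by simp [hrels]))

theorem hb_inv_mul_hc_mul_hb : (hb n m)⁻¹ * hc n m * hb n m = hc n m :=
  mul_inv_eq_one.mp (PresentedGroup.one_of_mem (by simp [hrels]))

theorem normalizer_hc_eq_top : Subgroup.normalizer {hc n m, (hc n m)⁻¹} = ⊤ := by
  refine eq_top_iff.mpr fun g _ => PresentedGroup.generated_by _ _ (fun i => ?_) g
  apply mem_normalizer_pair
  fin_cases i
  · exact .inr ha_inv_mul_hc_mul_ha
  · exact .inl hb_inv_mul_hc_mul_hb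
  · exact .inl (show (hc n m)⁻¹ * hc n m * hc n m = hc n m by group)

instance : CharP (kH n m) 2 :=
  charP_of_injective_algebraMap' (ZMod 2) 2

theorem e_hc_sub_one_pow_four : (e n m (hc n m) - 1) ^ 4 = 0 := by
  rw [show 4 = 2 ^ 2 from rfl, sub_pow_char_pow_of_commute 2 2 (Commute.one_right _), one_pow,
    ← map_pow, show 2 ^ 2 = 4 from rfl, hc_pow_four, map_one, sub_self]

theorem mul_mul_mul_eq_zero_of_mem_span {j₁ j₂ j₃ j₄ : kH n m}
    (h₁ : j₁ ∈ TwoSidedIdeal.span {e n m (hc n m) - 1})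
    (h₂ : j₂ ∈ TwoSidedIdeal.span {e n m (hc n m) - 1})
    (h₃ : j₃ ∈ TwoSidedIdeal.span {e n m (hc n m) - 1})
    (h₄ : j₄ ∈ TwoSidedIdeal.span {e n m (hc n m) - 1}) :
    j₁ * j₂ * j₃ * j₄ = 0 := by
  have hw : ∀ x : kH n m, ∃ y, (e n m (hc n m) - 1) * x = y * (e n m (hc n m) - 1) :=
    exists_of_sub_one_mul_eq_mul normalizer_hc_eq_top
  obtain ⟨t, ht⟩ := exists_mul_eq_mul_pow_succ hw
    (exists_mul_eq_mul_pow_succ hw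
      (exists_mul_eq_mul_pow_succ hw (k := 1)
        (by simpa using exists_eq_mul_of_mem_span_singleton hw h₁)
        (exists_eq_mul_of_mem_span_singleton hw h₂))
      (exists_eq_mul_of_mem_span_singleton hw h₃))
    (exists_eq_mul_of_mem_span_singleton hw h₄)
  exact ht.trans (mul_eq_zero_of_right t e_hc_sub_one_pow_four)

end GroupH

theorem statement_16_general (n m : ℕ) :
    (∀ j₁ j₂ j₃ j₄ : kH n m,
        j₁ ∈ TwoSidedIdeal.span {e n m (hc n m) - 1} →
        j₂ ∈ TwoSidedIdeal.span {e n m (hc n m) - 1} →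
        j₃ ∈ TwoSidedIdeal.span {e n m (hc n m) - 1} →
        j₄ ∈ TwoSidedIdeal.span {e n m (hc n m) - 1} →
        j₁ * j₂ * j₃ * j₄ = 0) ∧
    ∀ j : kH n m, j ∈ TwoSidedIdeal.span {e n m (hc n m) - 1} →
      (1 + j) ^ 4 = 1 := by
  refine ⟨fun _ _ _ _ => mul_mul_mul_eq_zero_of_mem_span, fun j hj => ?_⟩
  have hj4 : j ^ 4 = 0 := by
    simpa only [pow_succ, pow_zero, one_mul] using mul_mul_mul_eq_zero_of_mem_span hj hj hj hj
  calc (1 + j) ^ 4 = 1 ^ 2 ^ 2 + j ^ 2 ^ 2 :=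
        add_pow_char_pow_of_commute 2 2 (Commute.one_left j)
    _ = 1 := by rw [one_pow, show 2 ^ 2 = 4 from rfl, hj4, add_zero]

/-- Let `J` be the two-sided ideal of the group algebra `kH` (`k` the
field with 2 elements) generated by the element `c - 1`. Then `J⁴ = 0` (i.e. every
product of four elements of `J` vanishes), and consequently every element of `1 + J`
has fourth power equal to `1`. -/
theorem statement_16 (n m : ℕ) (hm : 2 < m) (hmn : m < n) :
    (∀ j₁ j₂ j₃ j₄ : kH n m,
        j₁ ∈ TwoSidedIdeal.span {e n m (hc n m) - 1} →
        j₂ ∈ TwoSidedIdeal.span {e n m (hc n m) - 1} →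
        j₃ ∈ TwoSidedIdeal.span {e n m (hc n m) - 1} →
        j₄ ∈ TwoSidedIdeal.span {e n m (hc n m) - 1} →
        j₁ * j₂ * j₃ * j₄ = 0) ∧
    ∀ j : kH n m, j ∈ TwoSidedIdeal.span {e n m (hc n m) - 1} →
      (1 + j) ^ 4 = 1 :=
  statement_16_general n m

end MIP
end
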